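/- arXiv:1807.01584 — 2 statements merged into one kernel-verified Lean document; each statement's English description precedes it below -/
import Mathlib

section
/- For every x-monotone polyomino P, max(μ, ν) ≤ d(P) ≤ μ + ν, where μ is the number of minima of the upper envelope of P, ν is the number of maxima of the lower envelope of P, and d(P) is the decomposition number of P. -/
/-- Two grid points are adjacent if they are at Euclidean distance 1. -/
def Adj (p q : ℤ × ℤ) : Prop := |p.1 - q.1| + |p.2 - q.2| = 1

/-- A set of grid points induces a connected grid graph. -/
def GridConnected (S : Set (ℤ × ℤ)) : Prop :=
  ∀ p ∈ S, ∀ q ∈ S,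
    Relation.ReflTransGen (fun a b => a ∈ S ∧ b ∈ S ∧ Adj a b) p q

/-- A polyomino: a finite nonempty set of grid points with connected grid graph. -/
def IsPolyomino (P : Finset (ℤ × ℤ)) : Prop :=
  P.Nonempty ∧ GridConnected ↑P

/-- x-monotone (column convex). -/
def ColumnConvex (S : Set (ℤ × ℤ)) : Prop :=
  ∀ x y₁ y₂ y : ℤ, (x, y₁) ∈ S → (x, y₂) ∈ S → y₁ ≤ y → y ≤ y₂ → (x, y) ∈ S

/-- y-monotone (row convex). -/
def RowConvex (S : Set (ℤ × ℤ)) : Prop :=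
  ∀ y x₁ x₂ x : ℤ, (x₁, y) ∈ S → (x₂, y) ∈ S → x₁ ≤ x → x ≤ x₂ → (x, y) ∈ S

/-- Orthogonally convex. -/
def OrthoConvex (S : Set (ℤ × ℤ)) : Prop := ColumnConvex S ∧ RowConvex S

/-- Simple (hole-free): the complement induces a connected grid graph. -/
def SimplePoly (P : Finset (ℤ × ℤ)) : Prop :=
  GridConnected ((↑P : Set (ℤ × ℤ))ᶜ)

/-- Left piece of the vertical cut at `c`. -/
def PLe (P : Finset (ℤ × ℤ)) (c : ℤ) : Finset (ℤ × ℤ) :=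
  P.filter (fun p => p.1 ≤ c)

/-- Right piece of the vertical cut at `c`. -/
def PGt (P : Finset (ℤ × ℤ)) (c : ℤ) : Finset (ℤ × ℤ) :=
  P.filter (fun p => c < p.1)

/-- Vertical straight 2-cut of `P` at position `c` into left piece `P₁` and right
piece `P₂`. -/
def IsVCut (P P₁ P₂ : Finset (ℤ × ℤ)) (c : ℤ) : Prop :=
  P₁ ∪ P₂ = P ∧ Disjoint P₁ P₂ ∧ P₁.Nonempty ∧ P₂.Nonempty ∧
  GridConnected ↑P₁ ∧ GridConnected ↑P₂ ∧
  ∀ p ∈ P₁, ∀ q ∈ P₂, Adj p q → p.1 = c ∧ q.1 = c + 1 ∧ p.2 = q.2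

/-- Valid vertical straight 2-cut: the pieces can be pulled apart horizontally. -/
def ValidVCut (P P₁ P₂ : Finset (ℤ × ℤ)) (c : ℤ) : Prop :=
  IsVCut P P₁ P₂ c ∧ ∀ k : ℤ, 1 ≤ k → ∀ p ∈ P₂, (p.1 + k, p.2) ∉ P₁

/-- Horizontal straight 2-cut of `P` at position `c` into bottom piece `P₁` and
top piece `P₂` (coordinates exchanged). -/
def IsHCut (P P₁ P₂ : Finset (ℤ × ℤ)) (c : ℤ) : Prop :=
  P₁ ∪ P₂ = P ∧ Disjoint P₁ P₂ ∧ P₁.Nonempty ∧ P₂.Nonempty ∧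
  GridConnected ↑P₁ ∧ GridConnected ↑P₂ ∧
  ∀ p ∈ P₁, ∀ q ∈ P₂, Adj p q → p.2 = c ∧ q.2 = c + 1 ∧ p.1 = q.1

/-- Valid horizontal straight 2-cut: the pieces can be pulled apart vertically. -/
def ValidHCut (P P₁ P₂ : Finset (ℤ × ℤ)) (c : ℤ) : Prop :=
  IsHCut P P₁ P₂ c ∧ ∀ k : ℤ, 1 ≤ k → ∀ p ∈ P₂, (p.1, p.2 + k) ∉ P₁

/-- The part of the decomposition of `P` by the vertical cut positions `C`
that contains the point `p`. -/
def CutPart (P : Finset (ℤ × ℤ)) (C : Finset ℤ) (p : ℤ × ℤ) : Finset (ℤ × ℤ) :=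
  P.filter (fun q => ∀ c ∈ C, (q.1 ≤ c ↔ p.1 ≤ c))

/-- The vertical cut positions `C` decompose `P` into orthogonally convex parts. -/
def Decomposes (P : Finset (ℤ × ℤ)) (C : Finset ℤ) : Prop :=
  ∀ p ∈ P, OrthoConvex ↑(CutPart P C p)

/-- The decomposition number `d(P)`: the minimum number of vertical cut positions
decomposing `P` into orthogonally convex parts. -/
noncomputable def decompNumber (P : Finset (ℤ × ℤ)) : ℕ :=
  sInf {k | ∃ C : Finset ℤ, C.card = k ∧ Decomposes P C}

/-- `(a, b, y₀)` is a minimum of the upper envelope of `P`. -/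
def UpperEnvMin (P : Set (ℤ × ℤ)) (a b y₀ : ℤ) : Prop :=
  a + 2 ≤ b ∧ (∀ x : ℤ, a ≤ x → x ≤ b → (x, y₀) ∈ P) ∧
  (a, y₀ + 1) ∈ P ∧ (b, y₀ + 1) ∈ P ∧ ∀ x : ℤ, a < x → x < b → (x, y₀ + 1) ∉ P

/-- `(a, b, y₀)` is a maximum of the lower envelope of `P`. -/
def LowerEnvMax (P : Set (ℤ × ℤ)) (a b y₀ : ℤ) : Prop :=
  a + 2 ≤ b ∧ (∀ x : ℤ, a ≤ x → x ≤ b → (x, y₀) ∈ P) ∧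
  (a, y₀ - 1) ∈ P ∧ (b, y₀ - 1) ∈ P ∧ ∀ x : ℤ, a < x → x < b → (x, y₀ - 1) ∉ P

/-- The four cells of the 2×2 square with lower-left corner `s`. -/
def SquareCells (s : ℤ × ℤ) : Finset (ℤ × ℤ) :=
  {s, (s.1 + 1, s.2), (s.1, s.2 + 1), (s.1 + 1, s.2 + 1)}

/-- A 2×2 square (given by its lower-left corner `s`) is a reflex witness of `P`
if it contains exactly three points of `P`. -/
def ReflexWitness (P : Finset (ℤ × ℤ)) (s : ℤ × ℤ) : Prop :=
  (SquareCells s ∩ P).card = 3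

/-- The number of reflex witnesses of `P`. -/
noncomputable def wRef (P : Finset (ℤ × ℤ)) : ℕ :=
  Set.ncard {s : ℤ × ℤ | ReflexWitness P s}

/-- A tile `t` is locally reflex: it is the corner tile of some reflex witness,
i.e. the square cell opposite to `t` is the one missing from `P`. -/
def LocallyReflex (P : Finset (ℤ × ℤ)) (t : ℤ × ℤ) : Prop :=
  ∃ s : ℤ × ℤ, ReflexWitness P s ∧ t ∈ SquareCells s ∧
    (2 * s.1 + 1 - t.1, 2 * s.2 + 1 - t.2) ∉ P

/-- The number of locally reflex tiles of `P`. -/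
noncomputable def rRef (P : Finset (ℤ × ℤ)) : ℕ :=
  Set.ncard {t : ℤ × ℤ | LocallyReflex P t}

/-- A tile `t` is locally convex: some 2×2 square contains `t` and no other
point of `P`. -/
def LocallyConvex (P : Finset (ℤ × ℤ)) (t : ℤ × ℤ) : Prop :=
  ∃ s : ℤ × ℤ, t ∈ SquareCells s ∧ SquareCells s ∩ P = {t}

/-- A straight 2-cut `(P₁, P₂)` is along a locally reflex tile of `P`. -/
def AlongReflex (P P₁ P₂ : Finset (ℤ × ℤ)) : Prop :=
  ∃ s : ℤ × ℤ, ReflexWitness P s ∧ (SquareCells s ∩ P₁).Nonempty ∧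
    (SquareCells s ∩ P₂).Nonempty

/-- A valid (not necessarily straight) 2-cut of `P` into `P₁` and `P₂`. -/
def ValidCut (P P₁ P₂ : Finset (ℤ × ℤ)) : Prop :=
  P₁ ∪ P₂ = P ∧ Disjoint P₁ P₂ ∧ P₁.Nonempty ∧ P₂.Nonempty ∧
  GridConnected ↑P₁ ∧ GridConnected ↑P₂ ∧
  ∃ v ∈ ({(1, 0), (-1, 0), (0, 1), (0, -1)} : Set (ℤ × ℤ)),
    ∀ k : ℤ, 1 ≤ k → ∀ p ∈ P₂, (p.1 + k * v.1, p.2 + k * v.2) ∉ P₁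

/-- A polyomino is 2-cuttable: it is orthogonally convex, or some valid 2-cut
splits it into two 2-cuttable polyominoes. -/
inductive TwoCuttable : Finset (ℤ × ℤ) → Prop
  | convex (P : Finset (ℤ × ℤ)) : IsPolyomino P → OrthoConvex ↑P → TwoCuttable P
  | cut (P P₁ P₂ : Finset (ℤ × ℤ)) : ValidCut P P₁ P₂ →
      TwoCuttable P₁ → TwoCuttable P₂ → TwoCuttable P

/-- A polyomino is straight 2-cuttable: it is orthogonally convex, or some valid
vertical or horizontal straight 2-cut splits it into two straight 2-cuttable
polyominoes. -/
inductive Straight2Cuttable : Finset (ℤ × ℤ) → Prop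
  | convex (P : Finset (ℤ × ℤ)) : IsPolyomino P → OrthoConvex ↑P → Straight2Cuttable P
  | vcut (P P₁ P₂ : Finset (ℤ × ℤ)) (c : ℤ) : ValidVCut P P₁ P₂ c →
      Straight2Cuttable P₁ → Straight2Cuttable P₂ → Straight2Cuttable P
  | hcut (P P₁ P₂ : Finset (ℤ × ℤ)) (c : ℤ) : ValidHCut P P₁ P₂ c →
      Straight2Cuttable P₁ → Straight2Cuttable P₂ → Straight2Cuttable P


/-!
A minimum `(a, b, y₀)` of the upper envelope, a dip, puts `(a, y₀ + 1)` and `(b, y₀ + 1)` in one row with a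
gap between them, so every decomposition cuts at some `c` with `a ≤ c < b`. In a column-convex
polyomino the intervals `[a, b)` of distinct dips are disjoint, so distinct dips use distinct
cuts; the same holds for the maxima of the lower envelope, the bumps, whence `max μ ν ≤ d(P)`.

Conversely, cut at the left end of every dip and every bump. If a row of a part had a gap at
column `x`, column `x` would lie entirely below (or above) that row. Then the minimum of the upper
envelope between the two ends of the row lies below the row, and the maximal stretch around it on
which the envelope takes this value is a dip of the part (symmetrically, a bump), which the cuts
have destroyed. So all parts are row convex and `d(P) ≤ μ + ν`.

Statements about the lower envelope follow from those about the upper one by the reflection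
`(x, y) ↦ (x, -y)`.
-/

lemma Adj.fst_eq_add_one_of_lt {p q : ℤ × ℤ} (h : Adj p q) (hlt : p.1 < q.1) :
    q.1 = p.1 + 1 ∧ q.2 = p.2 := by
  unfold Adj at h
  rcases abs_cases (p.1 - q.1) with ⟨_, _⟩ | ⟨_, _⟩ <;>
    rcases abs_cases (p.2 - q.2) with ⟨_, _⟩ | ⟨_, _⟩ <;> omega

def HasCrossings (S : Set (ℤ × ℤ)) : Prop :=
  ∀ p ∈ S, ∀ q ∈ S, ∀ c : ℤ, p.1 ≤ c → c < q.1 → ∃ y, (c, y) ∈ S ∧ (c + 1, y) ∈ S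

lemma GridConnected.hasCrossings {S : Set (ℤ × ℤ)} (hS : GridConnected S) : HasCrossings S := by
  intro p hp q hq c hpc hcq
  induction hS p hp q hq with
  | refl => omega
  | @tail b r _ hbr ih =>
    obtain ⟨hb, hr, hadj⟩ := hbr
    by_cases hcb : c < b.1
    · exact ih hb hcb
    obtain ⟨hr₁, hr₂⟩ := hadj.fst_eq_add_one_of_lt (by omega)
    have hb_eq : b = (c, b.2) := Prod.ext (by omega) rfl
    have hr_eq : r = (c + 1, b.2) := Prod.ext (by omega) hr₂
    exact ⟨b.2, hb_eq ▸ hb, hr_eq ▸ hr⟩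

lemma HasCrossings.exists_mem_column {S : Set (ℤ × ℤ)} (hS : HasCrossings S) {p q : ℤ × ℤ}
    (hp : p ∈ S) (hq : q ∈ S) {x : ℤ} (hpx : p.1 ≤ x) (hxq : x ≤ q.1) : ∃ y, (x, y) ∈ S := by
  rcases hxq.lt_or_eq with hxq | rfl
  · obtain ⟨y, hy, -⟩ := hS p hp q hq x hpx hxq
    exact ⟨y, hy⟩
  · exact ⟨q.2, hq⟩

def reflectY (p : ℤ × ℤ) : ℤ × ℤ := (p.1, -p.2)

lemma coe_image_reflectY (Q : Finset (ℤ × ℤ)) :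
    (↑(Q.image reflectY) : Set (ℤ × ℤ)) = reflectY ⁻¹' ↑Q := by
  have hinv : Function.Involutive reflectY := fun p => by simp [reflectY]
  rw [Finset.coe_image, Set.image_eq_preimage_of_inverse hinv.leftInverse hinv.rightInverse]

lemma mem_image_reflectY {Q : Finset (ℤ × ℤ)} {x y : ℤ} :
    (x, y) ∈ Q.image reflectY ↔ (x, -y) ∈ Q := by
  rw [← Finset.mem_coe, coe_image_reflectY]
  rfl

lemma ColumnConvex.preimage_reflectY {S : Set (ℤ × ℤ)} (hS : ColumnConvex S) :
    ColumnConvex (reflectY ⁻¹' S) :=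
  fun x _ _ _ h₁ h₂ hy₁ hy₂ => hS x _ _ _ h₂ h₁ (neg_le_neg hy₂) (neg_le_neg hy₁)

lemma HasCrossings.preimage_reflectY {S : Set (ℤ × ℤ)} (hS : HasCrossings S) :
    HasCrossings (reflectY ⁻¹' S) := by
  intro p hp q hq c hpc hcq
  obtain ⟨y, hy⟩ := hS _ hp _ hq c hpc hcq
  exact ⟨-y, by simpa [reflectY] using hy⟩

lemma lowerEnvMax_iff_upperEnvMin_reflectY {S : Set (ℤ × ℤ)} {a b y : ℤ} :
    LowerEnvMax S a b y ↔ UpperEnvMin (reflectY ⁻¹' S) a b (-y) := by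
  simp [LowerEnvMax, UpperEnvMin, reflectY, neg_add_eq_sub]

def column (Q : Finset (ℤ × ℤ)) (x : ℤ) : Finset ℤ :=
  (Q.filter (·.1 = x)).image Prod.snd

lemma mem_column {Q : Finset (ℤ × ℤ)} {x y : ℤ} : y ∈ column Q x ↔ (x, y) ∈ Q := by
  simp [column]

noncomputable def columnTop (Q : Finset (ℤ × ℤ)) (x : ℤ) : ℤ :=
  if h : (column Q x).Nonempty then (column Q x).max' h else 0

lemma le_columnTop {Q : Finset (ℤ × ℤ)} {x y : ℤ} (h : (x, y) ∈ Q) : y ≤ columnTop Q x := by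
  have hy := mem_column.2 h
  rw [columnTop, dif_pos ⟨y, hy⟩]
  exact (column Q x).le_max' y hy

lemma columnTop_mem {Q : Finset (ℤ × ℤ)} {x y : ℤ} (h : (x, y) ∈ Q) : (x, columnTop Q x) ∈ Q := by
  have hne : (column Q x).Nonempty := ⟨y, mem_column.2 h⟩
  rw [columnTop, dif_pos hne]
  exact mem_column.1 ((column Q x).max'_mem hne)

namespace UpperEnvMin

variable {S : Set (ℤ × ℤ)} {a b y a' b' y' : ℤ}

lemma le_of_mem (hS : ColumnConvex S) (h : UpperEnvMin S a b y) {x w : ℤ} (hax : a < x)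
    (hxb : x < b) (hw : (x, w) ∈ S) : w ≤ y := by
  by_contra! hyw
  exact h.2.2.2.2 x hax hxb (hS x y w (y + 1) (h.2.1 x hax.le hxb.le) hw (by omega) hyw)

lemma not_lt_left (hS : ColumnConvex S) (h : UpperEnvMin S a b y)
    (h' : UpperEnvMin S a' b' y') (ha : a < a') (hb : a' < b) : False := by
  obtain ⟨hab', hrow', ha', -, hgap'⟩ := h'
  have hy : y' + 1 ≤ y := h.le_of_mem hS ha hb ha'
  exact hgap' (a' + 1) (lt_add_one a') (by omega)
    (hS _ y' y _ (hrow' _ (by omega) (by omega)) (h.2.1 _ (by omega) (by omega)) (by omega) hy)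

lemma eq_of_overlap (hS : ColumnConvex S) (h : UpperEnvMin S a b y)
    (h' : UpperEnvMin S a' b' y') (h₁ : a < b') (h₂ : a' < b) : (a, b, y) = (a', b', y') := by
  obtain rfl : a = a' := by
    rcases lt_trichotomy a a' with ha | ha | ha
    · exact (h.not_lt_left hS h' ha h₂).elim
    · exact ha
    · exact (h'.not_lt_left hS h ha h₁).elim
  have hab := h.1
  have hab' := h'.1
  obtain rfl : y = y' := le_antisymm
    (h'.le_of_mem hS (lt_add_one a) (by omega) (h.2.1 _ (by omega) (by omega)))
    (h.le_of_mem hS (lt_add_one a) (by omega) (h'.2.1 _ (by omega) (by omega)))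
  obtain rfl : b = b' := by
    by_contra hne
    rcases lt_or_gt_of_ne hne with hb | hb
    · linarith [h'.le_of_mem hS (by omega) hb h.2.2.2.1]
    · linarith [h.le_of_mem hS (by omega) hb h'.2.2.2.1]
  rfl

end UpperEnvMin

lemma LowerEnvMax.eq_of_overlap {S : Set (ℤ × ℤ)} {a b y a' b' y' : ℤ} (hS : ColumnConvex S)
    (h : LowerEnvMax S a b y) (h' : LowerEnvMax S a' b' y') (h₁ : a < b') (h₂ : a' < b) :
    (a, b, y) = (a', b', y') := by
  simpa using (lowerEnvMax_iff_upperEnvMin_reflectY.1 h).eq_of_overlap hS.preimage_reflectY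
    (lowerEnvMax_iff_upperEnvMin_reflectY.1 h') h₁ h₂

section CutPart

variable {P : Finset (ℤ × ℤ)} {C : Finset ℤ} {p q r s : ℤ × ℤ}

lemma mem_cutPart : q ∈ CutPart P C p ↔ q ∈ P ∧ ∀ c ∈ C, (q.1 ≤ c ↔ p.1 ≤ c) :=
  Finset.mem_filter

lemma cutPart_subset : CutPart P C p ⊆ P :=
  Finset.filter_subset _ _

lemma mem_cutPart_of_between (hq : q ∈ CutPart P C p) (hr : r ∈ CutPart P C p) (hs : s ∈ P)
    (hqs : q.1 ≤ s.1) (hsr : s.1 ≤ r.1) : s ∈ CutPart P C p := by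
  refine mem_cutPart.2 ⟨hs, fun c hc => ⟨fun hsc => ?_, fun hpc => ?_⟩⟩
  · exact ((mem_cutPart.1 hq).2 c hc).1 (hqs.trans hsc)
  · exact hsr.trans (((mem_cutPart.1 hr).2 c hc).2 hpc)

lemma notMem_cutPart_add_one {c y y' : ℤ} (hc : c ∈ C)
    (h : (c, y) ∈ CutPart P C p) : (c + 1, y') ∉ CutPart P C p := by
  intro h'
  have := ((mem_cutPart.1 h').2 c hc).trans ((mem_cutPart.1 h).2 c hc).symm
  simp at this

lemma ColumnConvex.cutPart (hP : ColumnConvex ↑P) : ColumnConvex ↑(CutPart P C p) :=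
  fun x _ _ _ h₁ h₂ hy₁ hy₂ => mem_cutPart_of_between h₁ h₁
    (hP x _ _ _ (cutPart_subset h₁) (cutPart_subset h₂) hy₁ hy₂) le_rfl le_rfl

lemma HasCrossings.cutPart (hP : HasCrossings ↑P) : HasCrossings ↑(CutPart P C p) := by
  intro q hq r hr c hqc hcr
  obtain ⟨y, hy, hy'⟩ := hP q (cutPart_subset hq) r (cutPart_subset hr) c hqc hcr
  exact ⟨y, mem_cutPart_of_between hq hr hy hqc hcr.le,
    mem_cutPart_of_between hq hr hy' (by simp only; omega) hcr⟩

lemma not_upperEnvMin_cutPart (hC : ∀ a b y, UpperEnvMin ↑P a b y → a ∈ C) {a b y : ℤ} :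
    ¬ UpperEnvMin ↑(CutPart P C p) a b y := by
  rintro ⟨hab, hrow, ha, hb, hgap⟩
  have haC : a ∈ C := hC a b y ⟨hab, fun x h₁ h₂ => cutPart_subset (hrow x h₁ h₂),
    cutPart_subset ha, cutPart_subset hb, fun x h₁ h₂ hx => hgap x h₁ h₂
      (mem_cutPart_of_between (hrow x h₁.le h₂.le) (hrow x h₁.le h₂.le) hx le_rfl le_rfl)⟩
  exact notMem_cutPart_add_one haC (hrow a le_rfl (by omega)) (hrow _ (by omega) (by omega))

lemma not_lowerEnvMax_cutPart (hC : ∀ a b y, LowerEnvMax ↑P a b y → a ∈ C) {a b y : ℤ} :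
    ¬ LowerEnvMax ↑(CutPart P C p) a b y := by
  rintro ⟨hab, hrow, ha, hb, hgap⟩
  have haC : a ∈ C := hC a b y ⟨hab, fun x h₁ h₂ => cutPart_subset (hrow x h₁ h₂),
    cutPart_subset ha, cutPart_subset hb, fun x h₁ h₂ hx => hgap x h₁ h₂
      (mem_cutPart_of_between (hrow x h₁.le h₂.le) (hrow x h₁.le h₂.le) hx le_rfl le_rfl)⟩
  exact notMem_cutPart_add_one haC (hrow a le_rfl (by omega)) (hrow _ (by omega) (by omega))

lemma exists_cut_of_row_gap (hdec : Decomposes P C) {a b x y : ℤ} (ha : (a, y) ∈ P)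
    (hb : (b, y) ∈ P) (hx : (x, y) ∉ P) (hax : a ≤ x) (hxb : x ≤ b) :
    ∃ c ∈ C, a ≤ c ∧ c < b := by
  by_contra! hC
  have hbpart : (b, y) ∈ CutPart P C (a, y) :=
    mem_cutPart.2 ⟨hb, fun c hc => ⟨fun hbc => by simp only; omega, hC c hc⟩⟩
  have hapart : (a, y) ∈ CutPart P C (a, y) := mem_cutPart.2 ⟨ha, fun _ _ => Iff.rfl⟩
  exact hx (cutPart_subset ((hdec (a, y) ha).2 y a b x hapart hbpart hax hxb))

end CutPart

lemma decompNumber_le {P : Finset (ℤ × ℤ)} {C : Finset ℤ} (h : Decomposes P C) :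
    decompNumber P ≤ C.card :=
  Nat.sInf_le ⟨C, rfl, h⟩

lemma le_decompNumber {P : Finset (ℤ × ℤ)} {k : ℕ} (hex : ∃ C, Decomposes P C)
    (h : ∀ C, Decomposes P C → k ≤ C.card) : k ≤ decompNumber P := by
  obtain ⟨C, hC⟩ := hex
  refine le_csInf ⟨_, C, rfl, hC⟩ ?_
  rintro _ ⟨C', rfl, hC'⟩
  exact h C' hC'

lemma ncard_le_card_of_disjoint_intervals {ι : Type*} {T : Set ι} (lo hi : ι → ℤ) (C : Finset ℤ)
    (hcut : ∀ t ∈ T, ∃ c ∈ C, lo t ≤ c ∧ c < hi t)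
    (hdisj : ∀ t ∈ T, ∀ t' ∈ T, lo t < hi t' → lo t' < hi t → t = t') : T.ncard ≤ C.card := by
  choose! f hfC hf using hcut
  rw [← Set.ncard_coe_finset C]
  refine Set.ncard_le_ncard_of_injOn f hfC (fun t ht t' ht' he => ?_) C.finite_toSet
  have := hf t ht
  have := hf t' ht'
  exact hdisj t ht t' ht' (by omega) (by omega)

lemma ncard_upperEnvMin_le {P : Finset (ℤ × ℤ)} {C : Finset ℤ} (hP : ColumnConvex ↑P)
    (hdec : Decomposes P C) :
    {t : ℤ × ℤ × ℤ | UpperEnvMin ↑P t.1 t.2.1 t.2.2}.ncard ≤ C.card :=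
  ncard_le_card_of_disjoint_intervals (fun t => t.1) (fun t => t.2.1) C
    (fun _ ⟨hab, _, ha, hb, hgap⟩ => exists_cut_of_row_gap hdec ha hb
      (hgap _ (lt_add_one _) (by omega)) (by omega) (by omega))
    (fun _ ht _ ht' h₁ h₂ => ht.eq_of_overlap hP ht' h₁ h₂)

lemma ncard_lowerEnvMax_le {P : Finset (ℤ × ℤ)} {C : Finset ℤ} (hP : ColumnConvex ↑P)
    (hdec : Decomposes P C) :
    {t : ℤ × ℤ × ℤ | LowerEnvMax ↑P t.1 t.2.1 t.2.2}.ncard ≤ C.card :=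
  ncard_le_card_of_disjoint_intervals (fun t => t.1) (fun t => t.2.1) C
    (fun _ ⟨hab, _, ha, hb, hgap⟩ => exists_cut_of_row_gap hdec ha hb
      (hgap _ (lt_add_one _) (by omega)) (by omega) (by omega))
    (fun _ ht _ ht' h₁ h₂ => ht.eq_of_overlap hP ht' h₁ h₂)

section Valley

variable {Q : Finset (ℤ × ℤ)}

lemma upperEnvMin_of_valley (hcol : ColumnConvex ↑Q) (hcross : HasCrossings ↑Q)
    {a b y₀ va vb : ℤ} (hab : a + 2 ≤ b) (ha : (a, va) ∈ Q) (hva : y₀ < va) (hb : (b, vb) ∈ Q)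
    (hvb : y₀ < vb) (hmid : ∀ z, a < z → z < b → columnTop Q z = y₀) : UpperEnvMin ↑Q a b y₀ := by
  have hfloor : ∀ z, a < z → z < b → (z, y₀) ∈ Q := fun z h₁ h₂ => by
    obtain ⟨w, hw⟩ := hcross.exists_mem_column ha hb h₁.le h₂.le
    simpa only [hmid z h₁ h₂] using columnTop_mem hw
  have hbelow : ∀ z, a < z → z < b → ∀ w, (z, w) ∈ Q → w ≤ y₀ := fun z h₁ h₂ w hw =>
    hmid z h₁ h₂ ▸ le_columnTop hw
  obtain ⟨wa, hwa, hwa'⟩ :=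
    hcross _ ha _ (hfloor (a + 1) (by omega) (by omega)) a le_rfl (lt_add_one a)
  obtain ⟨wb, hwb', hwb⟩ :=
    hcross _ (hfloor (b - 1) (by omega) (by omega)) _ hb (b - 1) le_rfl (by simp)
  rw [sub_add_cancel] at hwb
  have hwa_le := hbelow (a + 1) (by omega) (by omega) wa hwa'
  have hwb_le := hbelow (b - 1) (by omega) (by omega) wb hwb'
  refine ⟨hab, fun z h₁ h₂ => ?_, hcol a wa va _ hwa ha (by omega) hva,
    hcol b wb vb _ hwb hb (by omega) hvb, fun z h₁ h₂ hz => ?_⟩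
  · rcases h₁.eq_or_lt with rfl | h₁
    · exact hcol _ wa va y₀ hwa ha hwa_le hva.le
    rcases h₂.eq_or_lt with rfl | h₂
    · exact hcol _ wb vb y₀ hwb hb hwb_le hvb.le
    exact hfloor z h₁ h₂
  · linarith [hbelow z h₁ h₂ _ hz]

lemma exists_ge_of_forall_not_upperEnvMin (hcol : ColumnConvex ↑Q) (hcross : HasCrossings ↑Q)
    (hU : ∀ a b y, ¬ UpperEnvMin ↑Q a b y) {x₁ x₂ x y : ℤ} (h₁ : (x₁, y) ∈ Q) (h₂ : (x₂, y) ∈ Q)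
    (hx₁ : x₁ ≤ x) (hx₂ : x ≤ x₂) : ∃ w, y ≤ w ∧ (x, w) ∈ Q := by
  have hcolumn : ∀ z, x₁ ≤ z → z ≤ x₂ → (z, columnTop Q z) ∈ Q := fun z hz₁ hz₂ =>
    let ⟨_, hw⟩ := hcross.exists_mem_column h₁ h₂ hz₁ hz₂
    columnTop_mem hw
  by_contra! hx
  have hux : columnTop Q x < y := by
    by_contra! h
    exact hx _ h (hcolumn x hx₁ hx₂)
  obtain ⟨xs, hxs, hmin⟩ :=
    (Finset.Icc x₁ x₂).exists_min_image (columnTop Q) ⟨x, Finset.mem_Icc.2 ⟨hx₁, hx₂⟩⟩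
  rw [Finset.mem_Icc] at hxs
  obtain ⟨y₀, hy₀⟩ : ∃ y₀, columnTop Q xs = y₀ := ⟨_, rfl⟩
  have hmin' : ∀ z, x₁ ≤ z → z ≤ x₂ → y₀ ≤ columnTop Q z := fun z hz₁ hz₂ =>
    hy₀ ▸ hmin z (Finset.mem_Icc.2 ⟨hz₁, hz₂⟩)
  have hy₀y : y₀ < y := (hmin' x hx₁ hx₂).trans_lt hux
  have hu₁ : y ≤ columnTop Q x₁ := le_columnTop h₁
  have hu₂ : y ≤ columnTop Q x₂ := le_columnTop h₂
  obtain ⟨a, ⟨hxa, has, hya⟩, hamax⟩ :=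
    Int.exists_greatest_of_bdd (P := fun z => x₁ ≤ z ∧ z ≤ xs ∧ y₀ < columnTop Q z)
      ⟨xs, fun _ hz => hz.2.1⟩ ⟨x₁, le_rfl, hxs.1, by omega⟩
  obtain ⟨b, ⟨hsb, hbx, hyb⟩, hbmin⟩ :=
    Int.exists_least_of_bdd (P := fun z => xs ≤ z ∧ z ≤ x₂ ∧ y₀ < columnTop Q z)
      ⟨xs, fun _ hz => hz.1⟩ ⟨x₂, hxs.2, le_rfl, by omega⟩
  have has' : a < xs := lt_of_le_of_ne has (by rintro rfl; omega)
  have hsb' : xs < b := lt_of_le_of_ne hsb (by rintro rfl; omega)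
  refine hU a b y₀ (upperEnvMin_of_valley hcol hcross (by omega) (hcolumn a hxa (by omega)) hya
    (hcolumn b (by omega) hbx) hyb fun z hz₁ hz₂ => le_antisymm ?_ (hmin' z (by omega) (by omega)))
  by_contra! hz
  rcases le_or_gt z xs with hzs | hzs
  · linarith [hamax z ⟨by omega, hzs, hz⟩]
  · linarith [hbmin z ⟨hzs.le, by omega, hz⟩]

lemma rowConvex_of_forall_not_envExtremum (hcol : ColumnConvex ↑Q) (hcross : HasCrossings ↑Q)
    (hU : ∀ a b y, ¬ UpperEnvMin ↑Q a b y) (hL : ∀ a b y, ¬ LowerEnvMax ↑Q a b y) :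
    RowConvex ↑Q := by
  intro y x₁ x₂ x h₁ h₂ hx₁ hx₂
  obtain ⟨w, hyw, hw⟩ := exists_ge_of_forall_not_upperEnvMin hcol hcross hU h₁ h₂ hx₁ hx₂
  have hQ := coe_image_reflectY Q
  obtain ⟨v, hyv, hv⟩ := exists_ge_of_forall_not_upperEnvMin (Q := Q.image reflectY)
    (hQ ▸ hcol.preimage_reflectY) (hQ ▸ hcross.preimage_reflectY)
    (fun a b y' h => hL a b (-y') (lowerEnvMax_iff_upperEnvMin_reflectY.2 (by rwa [neg_neg, ← hQ])))
    (mem_image_reflectY.2 (by rwa [neg_neg])) (mem_image_reflectY.2 (by rwa [neg_neg])) hx₁ hx₂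
  exact hcol x (-v) w y (mem_image_reflectY.1 hv) hw (by omega) hyw

end Valley

lemma decomposes_of_forall_envExtremum_mem {P : Finset (ℤ × ℤ)} {C : Finset ℤ} (hP : GridConnected ↑P)
    (hcol : ColumnConvex ↑P) (hC : ∀ a b y, UpperEnvMin ↑P a b y ∨ LowerEnvMax ↑P a b y → a ∈ C) :
    Decomposes P C := fun _ _ =>
  ⟨hcol.cutPart, rowConvex_of_forall_not_envExtremum hcol.cutPart hP.hasCrossings.cutPart
    (fun _ _ _ => not_upperEnvMin_cutPart fun a b y h => hC a b y (.inl h))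
    (fun _ _ _ => not_lowerEnvMax_cutPart fun a b y h => hC a b y (.inr h))⟩

lemma finite_envExtrema (P : Finset (ℤ × ℤ)) :
    {t : ℤ × ℤ × ℤ | UpperEnvMin ↑P t.1 t.2.1 t.2.2 ∨ LowerEnvMax ↑P t.1 t.2.1 t.2.2}.Finite := by
  refine (P.image Prod.fst ×ˢ P.image Prod.fst ×ˢ P.image Prod.snd).finite_toSet.subset ?_
  rintro ⟨a, b, y⟩ h
  obtain ⟨hab, hrow⟩ : a + 2 ≤ b ∧ ∀ x, a ≤ x → x ≤ b → (x, y) ∈ P := by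
    rcases h with h | h <;> exact ⟨h.1, h.2.1⟩
  have ha : (a, y) ∈ P := hrow a le_rfl (by omega)
  have hb : (b, y) ∈ P := hrow b (by omega) le_rfl
  simp only [Finset.coe_product, Set.mem_prod, Finset.coe_image, Set.mem_image, Finset.mem_coe]
  exact ⟨⟨_, ha, rfl⟩, ⟨_, hb, rfl⟩, ⟨_, ha, rfl⟩⟩

/-- For an x-monotone polyomino `P`,
`max(μ, ν) ≤ d(P) ≤ μ + ν` where `μ` is the number of minima of the upper
envelope and `ν` the number of maxima of the lower envelope. -/
theorem stmt3 (P : Finset (ℤ × ℤ)) (hP : IsPolyomino P) (hmono : ColumnConvex ↑P) :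
    max (Set.ncard {t : ℤ × ℤ × ℤ | UpperEnvMin ↑P t.1 t.2.1 t.2.2})
        (Set.ncard {t : ℤ × ℤ × ℤ | LowerEnvMax ↑P t.1 t.2.1 t.2.2})
      ≤ decompNumber P ∧
    decompNumber P ≤
      Set.ncard {t : ℤ × ℤ × ℤ | UpperEnvMin ↑P t.1 t.2.1 t.2.2} +
      Set.ncard {t : ℤ × ℤ × ℤ | LowerEnvMax ↑P t.1 t.2.1 t.2.2} := by
  set U := {t : ℤ × ℤ × ℤ | UpperEnvMin ↑P t.1 t.2.1 t.2.2}
  set L := {t : ℤ × ℤ × ℤ | LowerEnvMax ↑P t.1 t.2.1 t.2.2}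
  have hfin : (Prod.fst '' (U ∪ L)).Finite := (finite_envExtrema P).image _
  have hdec : Decomposes P hfin.toFinset :=
    decomposes_of_forall_envExtremum_mem hP.2 hmono fun a b y h => hfin.mem_toFinset.2 ⟨(a, b, y), h, rfl⟩
  refine ⟨le_decompNumber ⟨_, hdec⟩ fun C hC =>
    max_le (ncard_upperEnvMin_le hmono hC) (ncard_lowerEnvMax_le hmono hC), ?_⟩
  calc decompNumber P ≤ hfin.toFinset.card := decompNumber_le hdec
    _ = (Prod.fst '' (U ∪ L)).ncard := (Set.ncard_eq_toFinset_card _ hfin).symm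
    _ ≤ (U ∪ L).ncard := Set.ncard_image_le (finite_envExtrema P)
    _ ≤ U.ncard + L.ncard := Set.ncard_union_le U L
end

section
/- Let P be an orthogonally convex polyomino and let c ∈ ℤ be such that both P≤c = {p ∈ P : p₁ ≤ c} and P>c = {p ∈ P : p₁ > c} are nonempty. Then (P≤c, P>c) is a valid vertical straight 2-cut of P and both pieces are orthogonally convex polyominoes. Consequently, under the inductive definition that a polyomino Q decomposes into single tiles if |Q| = 1 or some valid vertical or horizontal straight 2-cut splits Q into two polyominoes that decompose into single tiles, every orthogonally convex polyomino decomposes into single tiles. -/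
/-- `P` decomposes into single tiles: it is a single tile, or some valid
vertical or horizontal straight 2-cut splits it into two polyominoes that
decompose into single tiles. -/
inductive DecToSingles : Finset (ℤ × ℤ) → Prop
  | single (P : Finset (ℤ × ℤ)) : P.card = 1 → DecToSingles P
  | vcut (P P₁ P₂ : Finset (ℤ × ℤ)) (c : ℤ) : ValidVCut P P₁ P₂ c →
      DecToSingles P₁ → DecToSingles P₂ → DecToSingles P
  | hcut (P P₁ P₂ : Finset (ℤ × ℤ)) (c : ℤ) : ValidHCut P P₁ P₂ c →
      DecToSingles P₁ → DecToSingles P₂ → DecToSingles P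


open Set

lemma Relation.ReflTransGen.exists_mem_notMem {α : Type*} {R : α → α → Prop} {A : Set α}
    {a b : α} (h : Relation.ReflTransGen R a b) (ha : a ∈ A) (hb : b ∉ A) :
    ∃ x y, R x y ∧ x ∈ A ∧ y ∉ A := by
  induction h with
  | refl => exact absurd ha hb
  | @tail y z _ hyz ih =>
    by_cases hy : y ∈ A
    · exact ⟨y, z, hyz, hy, hb⟩
    · exact ih hy

def IsBoxConvex {α : Type*} [Lattice α] (H : Set α) : Prop :=
  ∀ ⦃p⦄, p ∈ H → ∀ ⦃q⦄, q ∈ H → uIcc p q ⊆ H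

lemma isBoxConvex_prod {α β : Type*} [LinearOrder α] [LinearOrder β] {I : Set α} {J : Set β}
    [I.OrdConnected] [J.OrdConnected] : IsBoxConvex (I ×ˢ J) := fun p hp q hq => by
  rw [uIcc_prod_eq]
  exact prod_mono (OrdConnected.uIcc_subset ‹_› hp.1 hq.1) (OrdConnected.uIcc_subset ‹_› hp.2 hq.2)

section Grid

variable {S H : Set (ℤ × ℤ)} {p q : ℤ × ℤ}

lemma adj_iff_natAbs : Adj p q ↔ (p.1 - q.1).natAbs + (p.2 - q.2).natAbs = 1 := by
  rw [Adj, Int.abs_eq_natAbs, Int.abs_eq_natAbs]; omega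

lemma mem_uIcc_iff {r : ℤ × ℤ} :
    r ∈ uIcc p q ↔ r.1 ∈ uIcc p.1 q.1 ∧ r.2 ∈ uIcc p.2 q.2 := by
  rw [uIcc_prod_eq, mem_prod]

lemma exists_adj_mem_uIcc (hpq : p ≠ q) : ∃ r ∈ uIcc p q, Adj p r := by
  simp only [mem_uIcc_iff, mem_uIcc, adj_iff_natAbs]
  obtain h | h | h | h : p.1 < q.1 ∨ q.1 < p.1 ∨ p.2 < q.2 ∨ q.2 < p.2 := by
    rw [Ne, Prod.ext_iff] at hpq; omega
  exacts [⟨(p.1 + 1, p.2), by omega⟩, ⟨(p.1 - 1, p.2), by omega⟩,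
    ⟨(p.1, p.2 + 1), by omega⟩, ⟨(p.1, p.2 - 1), by omega⟩]

lemma ColumnConvex.uIcc_subset (h : ColumnConvex S) (hp : p ∈ S) (hq : q ∈ S)
    (hpq : p.1 = q.1) : uIcc p q ⊆ S := by
  intro r hr
  rw [mem_uIcc_iff, mem_uIcc, mem_uIcc] at hr
  obtain ⟨x, y⟩ := r
  have hx : x = p.1 := by omega
  subst hx
  rcases hr.2 with ⟨h₁, h₂⟩ | ⟨h₁, h₂⟩
  · exact h _ _ _ _ hp (hpq ▸ hq) h₁ h₂
  · exact h _ _ _ _ (hpq ▸ hq) hp h₁ h₂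

lemma RowConvex.uIcc_subset (h : RowConvex S) (hp : p ∈ S) (hq : q ∈ S)
    (hpq : p.2 = q.2) : uIcc p q ⊆ S := by
  intro r hr
  rw [mem_uIcc_iff, mem_uIcc, mem_uIcc] at hr
  obtain ⟨x, y⟩ := r
  have hy : y = p.2 := by omega
  subst hy
  rcases hr.1 with ⟨h₁, h₂⟩ | ⟨h₁, h₂⟩
  · exact h _ _ _ _ hp (hpq ▸ hq) h₁ h₂
  · exact h _ _ _ _ (hpq ▸ hq) hp h₁ h₂

-- A path from `p` into the open quadrant at `p` containing `q` enters it from one of the two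
-- rays bounding it; `p.2 ∉ [[a.2, q.2]]` says that `a.2` lies strictly on the side of `q.2`.
lemma exists_mem_aligned_toward (hS : GridConnected S) (hp : p ∈ S) (hq : q ∈ S) (hpq : p ≠ q) :
    ∃ a ∈ S, (a.1 = p.1 ∧ p.2 ∉ uIcc a.2 q.2) ∨ (a.2 = p.2 ∧ p.1 ∉ uIcc a.1 q.1) := by
  by_cases h₁ : p.1 = q.1
  · refine ⟨q, hq, .inl ⟨h₁.symm, ?_⟩⟩
    rw [uIcc_self, mem_singleton_iff]
    exact fun h₂ => hpq (Prod.ext h₁ h₂)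
  by_cases h₂ : p.2 = q.2
  · exact ⟨q, hq, .inr ⟨h₂.symm, by simpa using h₁⟩⟩
  obtain ⟨a, b, ⟨ha, -, hab⟩, haA, hbA⟩ :=
    (hS p hp q hq).exists_mem_notMem (A := {r | p.1 ∈ uIcc r.1 q.1 ∨ p.2 ∈ uIcc r.2 q.2})
      (.inl left_mem_uIcc) (by simp [mem_uIcc]; omega)
  refine ⟨a, ha, ?_⟩
  simp only [mem_ofPred_eq, mem_uIcc, adj_iff_natAbs] at haA hbA hab ⊢
  omega

lemma exists_adj_mem_inter_uIcc (hS : GridConnected S) (hconv : OrthoConvex S)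
    (hp : p ∈ S) (hq : q ∈ S) (hpq : p ≠ q) : ∃ r ∈ S ∩ uIcc p q, Adj p r := by
  obtain ⟨a, haS, ha⟩ := exists_mem_aligned_toward hS hp hq hpq
  have hsub : uIcc p a ⊆ S := by
    rcases ha with ⟨h, -⟩ | ⟨h, -⟩
    exacts [hconv.1.uIcc_subset hp haS h.symm, hconv.2.uIcc_subset hp haS h.symm]
  have hpa : p ≠ a := by rintro rfl; simp at ha
  obtain ⟨r, hr, hpr⟩ := exists_adj_mem_uIcc hpa
  refine ⟨r, ⟨hsub hr, ?_⟩, hpr⟩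
  simp only [mem_uIcc_iff, mem_uIcc, adj_iff_natAbs] at ha hr hpr ⊢
  omega

lemma reflTransGen_inter_of_isBoxConvex (hS : GridConnected S) (hconv : OrthoConvex S)
    (hH : IsBoxConvex H) {x y : ℤ × ℤ} (hx : x ∈ S ∩ H) (hy : y ∈ S ∩ H) :
    Relation.ReflTransGen (fun a b => a ∈ S ∩ H ∧ b ∈ S ∩ H ∧ Adj a b) x y := by
  by_cases hxy : x = y
  · exact hxy ▸ .refl
  obtain ⟨r, ⟨hrS, hr⟩, hxr⟩ := exists_adj_mem_inter_uIcc hS hconv hx.1 hy.1 hxy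
  have hrH : r ∈ S ∩ H := ⟨hrS, hH hx.2 hy.2 hr⟩
  exact .head ⟨hx, hrH, hxr⟩ (reflTransGen_inter_of_isBoxConvex hS hconv hH hrH hy)
termination_by (x.1 - y.1).natAbs + (x.2 - y.2).natAbs
decreasing_by
  simp only [mem_uIcc_iff, mem_uIcc, adj_iff_natAbs] at hr hxr
  omega

lemma GridConnected.inter (hS : GridConnected S) (hconv : OrthoConvex S)
    (hH : IsBoxConvex H) : GridConnected (S ∩ H) :=
  fun _ hp _ hq => reflTransGen_inter_of_isBoxConvex hS hconv hH hp hq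

lemma IsBoxConvex.orthoConvex (hH : IsBoxConvex H) : OrthoConvex H :=
  ⟨fun _ _ _ _ h₁ h₂ hy₁ hy₂ => hH h₁ h₂ (by simp [mem_uIcc_iff, mem_uIcc]; omega),
    fun _ _ _ _ h₁ h₂ hx₁ hx₂ => hH h₁ h₂ (by simp [mem_uIcc_iff, mem_uIcc]; omega)⟩

lemma OrthoConvex.inter (hS : OrthoConvex S) (hH : OrthoConvex H) : OrthoConvex (S ∩ H) :=
  ⟨fun x _ _ y h₁ h₂ hy₁ hy₂ => ⟨hS.1 x _ _ y h₁.1 h₂.1 hy₁ hy₂, hH.1 x _ _ y h₁.2 h₂.2 hy₁ hy₂⟩,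
    fun y _ _ x h₁ h₂ hx₁ hx₂ => ⟨hS.2 y _ _ x h₁.1 h₂.1 hx₁ hx₂, hH.2 y _ _ x h₁.2 h₂.2 hx₁ hx₂⟩⟩

end Grid

section Cuts

variable {P : Finset (ℤ × ℤ)} {c : ℤ}

def PBelow (P : Finset (ℤ × ℤ)) (c : ℤ) : Finset (ℤ × ℤ) :=
  P.filter (fun p => p.2 ≤ c)

def PAbove (P : Finset (ℤ × ℤ)) (c : ℤ) : Finset (ℤ × ℤ) :=
  P.filter (fun p => c < p.2)

lemma isPolyomino_and_orthoConvex_of_coe_eq_inter {T : Finset (ℤ × ℤ)} {H : Set (ℤ × ℤ)}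
    (hP : IsPolyomino P) (hconv : OrthoConvex ↑P) (hH : IsBoxConvex H)
    (hT : (T : Set (ℤ × ℤ)) = ↑P ∩ H) (hne : T.Nonempty) :
    IsPolyomino T ∧ OrthoConvex ↑T := by
  rw [IsPolyomino, hT]
  exact ⟨⟨hne, hP.2.inter hconv hH⟩, hconv.inter hH.orthoConvex⟩

variable (hP : IsPolyomino P) (hconv : OrthoConvex ↑P)
include hP hconv

lemma isPolyomino_and_orthoConvex_PLe (h : (PLe P c).Nonempty) :
    IsPolyomino (PLe P c) ∧ OrthoConvex ↑(PLe P c) :=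
  isPolyomino_and_orthoConvex_of_coe_eq_inter hP hconv (isBoxConvex_prod (I := Iic c) (J := univ))
    (by ext; simp [PLe]) h

lemma isPolyomino_and_orthoConvex_PGt (h : (PGt P c).Nonempty) :
    IsPolyomino (PGt P c) ∧ OrthoConvex ↑(PGt P c) :=
  isPolyomino_and_orthoConvex_of_coe_eq_inter hP hconv (isBoxConvex_prod (I := Ioi c) (J := univ))
    (by ext; simp [PGt]) h

lemma isPolyomino_and_orthoConvex_PBelow (h : (PBelow P c).Nonempty) :
    IsPolyomino (PBelow P c) ∧ OrthoConvex ↑(PBelow P c) :=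
  isPolyomino_and_orthoConvex_of_coe_eq_inter hP hconv (isBoxConvex_prod (I := univ) (J := Iic c))
    (by ext; simp [PBelow]) h

lemma isPolyomino_and_orthoConvex_PAbove (h : (PAbove P c).Nonempty) :
    IsPolyomino (PAbove P c) ∧ OrthoConvex ↑(PAbove P c) :=
  isPolyomino_and_orthoConvex_of_coe_eq_inter hP hconv (isBoxConvex_prod (I := univ) (J := Ioi c))
    (by ext; simp [PAbove]) h

lemma validVCut_PLe_PGt (h₁ : (PLe P c).Nonempty) (h₂ : (PGt P c).Nonempty) :
    ValidVCut P (PLe P c) (PGt P c) c := by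
  refine ⟨⟨?_, ?_, h₁, h₂, (isPolyomino_and_orthoConvex_PLe hP hconv h₁).1.2,
    (isPolyomino_and_orthoConvex_PGt hP hconv h₂).1.2, ?_⟩, ?_⟩
  · rw [PLe, PGt, ← Finset.filter_or]
    exact Finset.filter_true_of_mem fun r _ => le_or_gt r.1 c
  · exact Finset.disjoint_filter.2 fun _ _ => not_lt.2
  · intro p hp q hq hpq
    simp only [PLe, PGt, Finset.mem_filter, adj_iff_natAbs] at hp hq hpq
    omega
  · intro k hk p hp hkp
    simp only [PLe, PGt, Finset.mem_filter] at hp hkp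
    omega

lemma validHCut_PBelow_PAbove (h₁ : (PBelow P c).Nonempty) (h₂ : (PAbove P c).Nonempty) :
    ValidHCut P (PBelow P c) (PAbove P c) c := by
  refine ⟨⟨?_, ?_, h₁, h₂, (isPolyomino_and_orthoConvex_PBelow hP hconv h₁).1.2,
    (isPolyomino_and_orthoConvex_PAbove hP hconv h₂).1.2, ?_⟩, ?_⟩
  · rw [PBelow, PAbove, ← Finset.filter_or]
    exact Finset.filter_true_of_mem fun r _ => le_or_gt r.2 c
  · exact Finset.disjoint_filter.2 fun _ _ => not_lt.2
  · intro p hp q hq hpq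
    simp only [PBelow, PAbove, Finset.mem_filter, adj_iff_natAbs] at hp hq hpq
    omega
  · intro k hk p hp hkp
    simp only [PBelow, PAbove, Finset.mem_filter] at hp hkp
    omega

end Cuts

lemma decToSingles_of_orthoConvex (Q : Finset (ℤ × ℤ)) (hQ : IsPolyomino Q)
    (hconv : OrthoConvex ↑Q) : DecToSingles Q := by
  induction Q using Finset.strongInduction with
  | H Q ih =>
  obtain hQ₁ | hQ₂ : Q.card = 1 ∨ 1 < Q.card := by have := hQ.1.card_pos; omega
  · exact .single Q hQ₁
  obtain ⟨a, ha, b, hb, hab⟩ := Finset.one_lt_card.1 hQ₂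
  obtain ⟨a, ha, b, hb, h⟩ | ⟨a, ha, b, hb, h⟩ :
      (∃ a ∈ Q, ∃ b ∈ Q, a.1 < b.1) ∨ (∃ a ∈ Q, ∃ b ∈ Q, a.2 < b.2) := by
    rw [Ne, Prod.ext_iff, not_and_or] at hab
    rcases hab with h | h <;> rcases Ne.lt_or_gt h with h | h
    exacts [.inl ⟨a, ha, b, hb, h⟩, .inl ⟨b, hb, a, ha, h⟩, .inr ⟨a, ha, b, hb, h⟩,
      .inr ⟨b, hb, a, ha, h⟩]
  · have h₁ : (PLe Q a.1).Nonempty := ⟨a, by simp [PLe, ha]⟩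
    have h₂ : (PGt Q a.1).Nonempty := ⟨b, by simp [PGt, hb, h]⟩
    obtain ⟨hP₁, hc₁⟩ := isPolyomino_and_orthoConvex_PLe hQ hconv h₁
    obtain ⟨hP₂, hc₂⟩ := isPolyomino_and_orthoConvex_PGt hQ hconv h₂
    exact .vcut Q _ _ a.1 (validVCut_PLe_PGt hQ hconv h₁ h₂)
      (ih _ (Finset.filter_ssubset.2 ⟨b, hb, by omega⟩) hP₁ hc₁)
      (ih _ (Finset.filter_ssubset.2 ⟨a, ha, by omega⟩) hP₂ hc₂)
  · have h₁ : (PBelow Q a.2).Nonempty := ⟨a, by simp [PBelow, ha]⟩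
    have h₂ : (PAbove Q a.2).Nonempty := ⟨b, by simp [PAbove, hb, h]⟩
    obtain ⟨hP₁, hc₁⟩ := isPolyomino_and_orthoConvex_PBelow hQ hconv h₁
    obtain ⟨hP₂, hc₂⟩ := isPolyomino_and_orthoConvex_PAbove hQ hconv h₂
    exact .hcut Q _ _ a.2 (validHCut_PBelow_PAbove hQ hconv h₁ h₂)
      (ih _ (Finset.filter_ssubset.2 ⟨b, hb, by omega⟩) hP₁ hc₁)
      (ih _ (Finset.filter_ssubset.2 ⟨a, ha, by omega⟩) hP₂ hc₂)

/-- Cutting an orthogonally convex polyomino vertically at `c`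
(both pieces nonempty) gives a valid vertical straight 2-cut into two
orthogonally convex polyominoes; consequently every orthogonally convex
polyomino decomposes into single tiles. -/
theorem stmt6 (P : Finset (ℤ × ℤ)) (c : ℤ)
    (hP : IsPolyomino P) (hconv : OrthoConvex ↑P)
    (h₁ : (PLe P c).Nonempty) (h₂ : (PGt P c).Nonempty) :
    (ValidVCut P (PLe P c) (PGt P c) c ∧
      (IsPolyomino (PLe P c) ∧ OrthoConvex ↑(PLe P c)) ∧
      (IsPolyomino (PGt P c) ∧ OrthoConvex ↑(PGt P c))) ∧
    ∀ Q : Finset (ℤ × ℤ), IsPolyomino Q → OrthoConvex ↑Q → DecToSingles Q :=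
  ⟨⟨validVCut_PLe_PGt hP hconv h₁ h₂, isPolyomino_and_orthoConvex_PLe hP hconv h₁,
      isPolyomino_and_orthoConvex_PGt hP hconv h₂⟩,
    decToSingles_of_orthoConvex⟩
end
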